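/- arXiv:1512.02833 — 5 statements merged into one kernel-verified Lean document; each statement's English description precedes it below -/
import Mathlib

section
/- For all β ≥ 0 and all s ∈ {+1, −1}, the quantity N_s^{-2} := (1/(8π)) [ √(1+√(1+β²)) + (α/2 − sβ/α)(Arg(1 + c(1+i)) − Arg(1 − c(1+i))) ] is strictly positive for every α > 0, where c := (α/(2β)) (2 + β² − 2√(1+β²))^{1/4} (interpreted by its limit when β = 0). -/
set_option maxHeartbeats 1000000

open Complex Real

lemma my_arctan_le_self {x : ℝ} (hx : 0 ≤ x) : Real.arctan x ≤ x := by
  have h0 : 0 ≤ Real.arctan x := by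
    rw [← Real.arctan_zero]
    exact Real.arctan_strictMono.monotone hx
  calc Real.arctan x ≤ Real.tan (Real.arctan x) :=
        Real.le_tan h0 (Real.arctan_lt_pi_div_two x)
    _ = x := Real.tan_arctan x

lemma my_arg_eq_arctan {z : ℂ} (h : 0 < z.re) : z.arg = Real.arctan (z.im / z.re) := by
  rw [← Complex.tan_arg z, Real.arctan_tan]
  · exact Complex.neg_pi_div_two_lt_arg_iff.mpr (Or.inl h)
  · exact Complex.arg_lt_pi_div_two_iff.mpr (Or.inl h)

theorem stmt1 (α β : ℝ) (hα : 0 < α) (hβ : 0 ≤ β) (s : ℝ) (hs : s = 1 ∨ s = -1)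
    (c : ℝ)
    (hc : c = if β = 0 then α / (2 * Real.sqrt 2)
      else α / (2 * β) * Real.sqrt (Real.sqrt (2 + β ^ 2 - 2 * Real.sqrt (1 + β ^ 2)))) :
    0 < (1 / (8 * Real.pi)) *
      (Real.sqrt (1 + Real.sqrt (1 + β ^ 2)) +
        (α / 2 - s * β / α) *
          (Complex.arg (1 + (c : ℂ) * (1 + Complex.I)) -
            Complex.arg (1 - (c : ℂ) * (1 + Complex.I)))) := by
  set t := Real.sqrt (1 + β ^ 2) with htdef
  have ht2 : t ^ 2 = 1 + β ^ 2 := Real.sq_sqrt (by positivity)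
  have ht0 : 0 ≤ t := Real.sqrt_nonneg _
  have ht1 : 1 ≤ t := by nlinarith
  set q := Real.sqrt (1 + t) with hqdef
  have hq2 : q ^ 2 = 1 + t := Real.sq_sqrt (by linarith)
  have hq0 : 0 < q := Real.sqrt_pos.mpr (by linarith)
  -- c = α / (2 q)
  have hcq : c = α / (2 * q) := by
    rcases eq_or_ne β 0 with hb0 | hb0
    · rw [hc, if_pos hb0]
      have : t = 1 := by rw [htdef, hb0]; norm_num
      rw [hqdef, this]
      norm_num
    · have hbpos : 0 < β := lt_of_le_of_ne hβ (Ne.symm hb0)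
      have ht1' : 1 < t := by nlinarith
      rw [hc, if_neg hb0]
      have h1 : 2 + β ^ 2 - 2 * t = (t - 1) ^ 2 := by nlinarith
      rw [h1, Real.sqrt_sq (by linarith)]
      have hbeq : β = Real.sqrt (t - 1) * Real.sqrt (t + 1) := by
        rw [← Real.sqrt_mul (by linarith) (t + 1)]
        rw [show (t - 1) * (t + 1) = β ^ 2 by nlinarith]
        exact (Real.sqrt_sq hβ).symm
      have hs1 : 0 < Real.sqrt (t - 1) := Real.sqrt_pos.mpr (by linarith)
      have hs2 : 0 < Real.sqrt (t + 1) := Real.sqrt_pos.mpr (by linarith)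
      rw [hbeq, hqdef, show 1 + t = t + 1 by ring]
      field_simp
  have hc0 : 0 < c := by rw [hcq]; positivity
  -- the two complex numbers
  set z1 : ℂ := 1 + (c : ℂ) * (1 + Complex.I) with hz1
  set z2 : ℂ := 1 - (c : ℂ) * (1 + Complex.I) with hz2
  have hz1re : z1.re = 1 + c := by simp [hz1]
  have hz1im : z1.im = c := by simp [hz1]
  have hz2re : z2.re = 1 - c := by simp [hz2]
  have hz2im : z2.im = -c := by simp [hz2]
  have harg1 : z1.arg = Real.arctan (c / (1 + c)) := by
    rw [my_arg_eq_arctan (by rw [hz1re]; linarith), hz1re, hz1im]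
  have h1a : 0 ≤ z1.arg := by
    rw [harg1, ← Real.arctan_zero]
    exact Real.arctan_strictMono.monotone (by positivity)
  have h1b : z1.arg ≤ c := by
    rw [harg1]
    calc Real.arctan (c / (1 + c)) ≤ c / (1 + c) := my_arctan_le_self (by positivity)
      _ ≤ c := by rw [div_le_iff₀ (by linarith)]; nlinarith
  have h2a : z2.arg < 0 := Complex.arg_neg_iff.mpr (by rw [hz2im]; linarith)
  set D := z1.arg - z2.arg with hD
  have hD0 : 0 < D := by rw [hD]; linarith
  -- key inequality
  have hkey : D ≤ 2 * c + 2 * c ^ 2 * D := by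
    rcases le_or_gt 1 (2 * c ^ 2) with h | h
    · nlinarith
    · have hc1 : c < 1 := by nlinarith
      have harg2 : z2.arg = Real.arctan (-c / (1 - c)) := by
        rw [my_arg_eq_arctan (by rw [hz2re]; linarith), hz2re, hz2im]
      have hm : 0 < 1 - c := by linarith
      have e2 : -(c / (1 - c)) ≤ z2.arg := by
        rw [harg2, neg_div, Real.arctan_neg, neg_le_neg_iff]
        exact my_arctan_le_self (div_nonneg hc0.le hm.le)
      have e1 : z1.arg ≤ c / (1 + c) := by
        rw [harg1]
        exact my_arctan_le_self (div_nonneg hc0.le (by linarith))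
      have e1' : z1.arg * (1 + c) ≤ c := (le_div_iff₀ (by linarith)).mp e1
      have e2' : (-z2.arg) * (1 - c) ≤ c := by
        have h7 : -z2.arg ≤ c / (1 - c) := by linarith
        exact (le_div_iff₀ hm).mp h7
      have p1 := mul_le_mul_of_nonneg_right e1' hm.le
      have p2 := mul_le_mul_of_nonneg_right e2' (by linarith : (0:ℝ) ≤ 1 + c)
      nlinarith [mul_nonneg hD0.le (sq_nonneg c)]
  -- conclude
  have hpi : 0 < 1 / (8 * Real.pi) := by positivity
  apply mul_pos hpi
  rcases le_or_gt 0 (α / 2 - s * β / α) with hK | hK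
  · have := mul_nonneg hK hD0.le
    linarith
  · have hs1 : s = 1 := by
      rcases hs with h | h
      · exact h
      · exfalso
        rw [h] at hK
        have h8 : 0 ≤ α / 2 + β / α := by positivity
        have h9 : α / 2 - -1 * β / α = α / 2 + β / α := by ring
        rw [h9] at hK
        linarith
    rw [hs1]
    have hβq : β < q ^ 2 := by nlinarith
    have hαq : α = 2 * q * c := by rw [hcq]; field_simp
    have hX : 0 < 2 * c + 2 * c ^ 2 * D := by positivity
    have h6 : β * D < q ^ 2 * (2 * c + 2 * c ^ 2 * D) := by
      calc β * D ≤ β * (2 * c + 2 * c ^ 2 * D) := mul_le_mul_of_nonneg_left hkey hβ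
        _ < q ^ 2 * (2 * c + 2 * c ^ 2 * D) := by
            exact mul_lt_mul_of_pos_right hβq hX
    have goal2 : 0 < q * α + (α ^ 2 / 2) * D - β * D := by
      rw [hαq]; nlinarith [h6]
    have heq : q + (α / 2 - 1 * β / α) * D
        = (q * α + (α ^ 2 / 2) * D - β * D) / α := by
      field_simp
      ring
    rw [heq]
    positivity
end

section
/- Fix β ≥ 0 and define f(α, β) := (β/α − α/2)(Arg(1 + c(1+i)) − Arg(1 − c(1+i))) for α with 0 < α < √(2β), where c := (α/(2β))(2+β²−2√(1+β²))^{1/4}. Then f(α, β) ≤ f(0, β) = (2+β²−2√(1+β²))^{1/4} < √(1+√(1+β²)), where f(0, β) is the limit of f(α, β) as α ↓ 0. -/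
/-!
Write `s = √(1 + β²)`. The radicand `2 + β² - 2s` equals `(s - 1)²`, so the constant is
`k = √(s - 1)`, and `k² = s - 1 ≤ β`. For `0 ≤ c < 1` the argument gap is
`arctan (c/(1+c)) + arctan (c/(1-c)) ≤ 2c/(1-c²)`. With `c = αk/(2β)` the prefactor satisfies
`(β/α - α/2)·2c = k - cα`, and `k - cα ≤ k(1 - c²)` amounts to `kc ≤ α`, i.e. `k² ≤ 2β`.
For the limit, the gap has derivative `2 = 2 Im(1 + i)` at `0`, so `f α → β · 2k/(2β) = k`.
-/

open Real Filter Topology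
open Complex (arg I)

noncomputable def argGap (c : ℝ) : ℝ := arg (1 + c * (1 + I)) - arg (1 - c * (1 + I))

theorem argGap_zero : argGap 0 = 0 := by simp [argGap]

theorem Real.arctan_le_self {x : ℝ} (hx : 0 ≤ x) : arctan x ≤ x :=
  calc arctan x ≤ tan (arctan x) := le_tan (arctan_nonneg.2 hx) (arctan_lt_pi_div_two x)
    _ = x := tan_arctan x

theorem Complex.arg_ofReal_add_ofReal_mul_I {a : ℝ} (b : ℝ) (ha : 0 < a) :
    arg (a + b * I) = Real.arctan (b / a) := by
  have hre : (a + b * I : ℂ).re = a := by simp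
  have htan : Real.tan (arg (a + b * I)) = b / a := by simp [tan_arg]
  obtain ⟨hlo, hhi⟩ := abs_lt.1 (abs_arg_lt_pi_div_two_iff.2 (Or.inl (hre ▸ ha)))
  rw [← htan, Real.arctan_tan hlo hhi]

theorem argGap_eq {c : ℝ} (hc₀ : -1 < c) (hc₁ : c < 1) :
    argGap c = arctan (c / (1 + c)) + arctan (c / (1 - c)) := by
  have hplus : (1 : ℂ) + c * (1 + I) = ((1 + c : ℝ) : ℂ) + (c : ℝ) * I := by push_cast; ring
  have hminus : (1 : ℂ) - c * (1 + I) = ((1 - c : ℝ) : ℂ) + (-c : ℝ) * I := by push_cast; ring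
  rw [argGap, hplus, hminus, Complex.arg_ofReal_add_ofReal_mul_I _ (by linarith),
    Complex.arg_ofReal_add_ofReal_mul_I _ (by linarith), neg_div, arctan_neg, sub_neg_eq_add]

theorem argGap_le {c : ℝ} (hc₀ : 0 ≤ c) (hc₁ : c < 1) : argGap c ≤ 2 * c / (1 - c ^ 2) := by
  rw [argGap_eq (by linarith) hc₁]
  calc arctan (c / (1 + c)) + arctan (c / (1 - c)) ≤ c / (1 + c) + c / (1 - c) :=
        add_le_add (arctan_le_self (by positivity)) (arctan_le_self (div_nonneg hc₀ (by linarith)))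
    _ = 2 * c / (1 - c ^ 2) := by
        rw [div_add_div _ _ (by linarith) (by linarith)]
        ring

theorem hasDerivAt_arg_one_add_mul (w : ℂ) :
    HasDerivAt (fun c : ℝ => arg (1 + c * w)) w.im 0 := by
  have hlin : HasDerivAt (fun c : ℝ => 1 + (c : ℂ) * w) w 0 := by
    simpa using ((hasDerivAt_id (0 : ℝ)).ofReal_comp.mul_const w).const_add 1
  simpa [Function.comp_def, Complex.log_im] using
    Complex.imCLM.hasFDerivAt.comp_hasDerivAt (0 : ℝ) (hlin.clog_real (by simp))

theorem hasDerivAt_argGap : HasDerivAt argGap 2 0 := by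
  have h := (hasDerivAt_arg_one_add_mul (1 + I)).sub (hasDerivAt_arg_one_add_mul (-(1 + I)))
  simp only [mul_neg, ← sub_eq_add_neg, Complex.neg_im, Complex.add_im, Complex.one_im,
    Complex.I_im] at h
  norm_num at h
  exact h

theorem mul_argGap_le {β k α : ℝ} (hk : 0 ≤ k) (hk2 : k ^ 2 ≤ 2 * β) (hα : 0 < α)
    (hα2 : α ^ 2 < 2 * β) : (β / α - α / 2) * argGap (α / (2 * β) * k) ≤ k := by
  have hβ : 0 < β := by nlinarith
  set c := α / (2 * β) * k with hc
  have hcβ : c * (2 * β) = α * k := by rw [hc]; field_simp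
  have hc₀ : 0 ≤ c := by positivity
  clear_value c
  have hkc : k * c ≤ α :=
    le_of_mul_le_mul_right (by nlinarith) (by positivity : 0 < 2 * β)
  have hc₁ : c < 1 := by
    have : (c * (2 * β)) ^ 2 < (2 * β) ^ 2 := by rw [hcβ, mul_pow]; nlinarith
    have := (pow_lt_pow_iff_left₀ (by positivity) (by positivity) two_ne_zero).1 this
    nlinarith
  have hfactor : 0 ≤ β / α - α / 2 := by
    rw [sub_nonneg, div_le_div_iff₀ two_pos hα]; nlinarith
  have hkey : (β / α - α / 2) * (2 * c) = k - c * α := by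
    have : β / α * (2 * c) = k := by
      rw [show β / α * (2 * c) = c * (2 * β) / α by ring, hcβ]; field_simp
    linear_combination this
  calc (β / α - α / 2) * argGap c ≤ (β / α - α / 2) * (2 * c / (1 - c ^ 2)) :=
        mul_le_mul_of_nonneg_left (argGap_le hc₀ hc₁) hfactor
    _ = (k - c * α) / (1 - c ^ 2) := by rw [← hkey]; ring
    _ ≤ k := by
        rw [div_le_iff₀ (by nlinarith)]
        nlinarith [mul_le_mul_of_nonneg_left hkc hc₀]

theorem tendsto_mul_argGap {β : ℝ} (hβ : 0 < β) (k : ℝ) :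
    Tendsto (fun α => (β / α - α / 2) * argGap (α / (2 * β) * k)) (𝓝[>] 0) (𝓝 k) := by
  have hinner : HasDerivAt (fun α : ℝ => α / (2 * β) * k) (1 / (2 * β) * k) 0 :=
    ((hasDerivAt_id 0).div_const _).mul_const k
  have hgap : HasDerivAt (fun α : ℝ => argGap (α / (2 * β) * k)) (2 * (1 / (2 * β) * k)) 0 :=
    hasDerivAt_argGap.comp_of_eq 0 hinner (by simp)
  have hfactor : Tendsto (fun α : ℝ => β - α ^ 2 / 2) (𝓝[>] 0) (𝓝 β) := by
    have : Continuous (fun α : ℝ => β - α ^ 2 / 2) := by fun_prop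
    simpa using (this.tendsto 0).mono_left nhdsWithin_le_nhds
  have hlim := hfactor.mul hgap.tendsto_slope_zero_right
  rw [show β * (2 * (1 / (2 * β) * k)) = k by field_simp] at hlim
  refine hlim.congr' (eventually_nhdsWithin_of_forall fun α (hα : 0 < α) => ?_)
  simp only [zero_add, zero_div, zero_mul, argGap_zero, sub_zero, smul_eq_mul]
  field_simp

theorem sqrt_two_add_sq_sub_two_mul_sqrt (β : ℝ) :
    √(2 + β ^ 2 - 2 * √(1 + β ^ 2)) = √(1 + β ^ 2) - 1 := by
  have hs : √(1 + β ^ 2) ^ 2 = 1 + β ^ 2 := sq_sqrt (by positivity)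
  have hs₁ : 1 ≤ √(1 + β ^ 2) := one_le_sqrt.2 (by nlinarith)
  rw [show 2 + β ^ 2 - 2 * √(1 + β ^ 2) = (√(1 + β ^ 2) - 1) ^ 2 by nlinarith,
    sqrt_sq (by linarith)]

theorem stmt4 (β : ℝ) (hβ : 0 ≤ β) (f : ℝ → ℝ)
    (hf : ∀ α : ℝ, f α = (β / α - α / 2) *
      (Complex.arg (1 + ((α / (2 * β) *
          Real.sqrt (Real.sqrt (2 + β ^ 2 - 2 * Real.sqrt (1 + β ^ 2))) : ℝ) : ℂ) *
          (1 + Complex.I)) -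
       Complex.arg (1 - ((α / (2 * β) *
          Real.sqrt (Real.sqrt (2 + β ^ 2 - 2 * Real.sqrt (1 + β ^ 2))) : ℝ) : ℂ) *
          (1 + Complex.I)))) :
    (∀ α : ℝ, 0 < α → α < Real.sqrt (2 * β) →
      f α ≤ Real.sqrt (Real.sqrt (2 + β ^ 2 - 2 * Real.sqrt (1 + β ^ 2)))) ∧
    Filter.Tendsto f (nhdsWithin 0 (Set.Ioi 0))
      (nhds (Real.sqrt (Real.sqrt (2 + β ^ 2 - 2 * Real.sqrt (1 + β ^ 2))))) ∧
    Real.sqrt (Real.sqrt (2 + β ^ 2 - 2 * Real.sqrt (1 + β ^ 2))) <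
      Real.sqrt (1 + Real.sqrt (1 + β ^ 2)) := by
  rw [sqrt_two_add_sq_sub_two_mul_sqrt] at hf ⊢
  have hs₁ : 1 ≤ √(1 + β ^ 2) := one_le_sqrt.2 (by nlinarith)
  have hsβ : √(1 + β ^ 2) ≤ 1 + β := sqrt_le_iff.2 ⟨by linarith, by nlinarith⟩
  have hk2 : √(√(1 + β ^ 2) - 1) ^ 2 ≤ 2 * β := by rw [sq_sqrt (by linarith)]; linarith
  refine ⟨fun α hα hαβ => ?_, ?_, sqrt_lt_sqrt (by linarith) (by linarith)⟩
  · rw [hf α]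
    exact mul_argGap_le (sqrt_nonneg _) hk2 hα (lt_sqrt hα.le |>.1 hαβ)
  · rcases hβ.eq_or_lt with rfl | hβ
    · have hf₀ : f = fun _ => 0 := funext fun α => by simp [hf]
      simp [hf₀]
    · exact (tendsto_mul_argGap hβ _).congr fun α => (hf α).symm
end

section
/- Let β > 0, γ ≥ 0, ω_± ∈ ℝ. The set of E < −β satisfying γ = (ω_+ + √(β−E))(ω_− + √(−β−E)) is finite. -/
theorem stmt9 (β γ ωp ωm : ℝ) (hβ : 0 < β) (hγ : 0 ≤ γ) :
    {E : ℝ | E < -β ∧ γ = (ωp + Real.sqrt (β - E)) * (ωm + Real.sqrt (-β - E))}.Finite := by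
  set S : Set ℝ := {E : ℝ | E < -β ∧ γ = (ωp + Real.sqrt (β - E)) * (ωm + Real.sqrt (-β - E))}
  set f : ℝ → ℝ := fun t => (ωp + Real.sqrt (t ^ 2 + 2 * β)) * (ωm + t) - γ with hf
  set M : ℝ := |ωp| + |ωm| + γ + 1 with hM
  have hM1 : (1 : ℝ) ≤ M := by
    have := abs_nonneg ωp; have := abs_nonneg ωm
    simp only [hM]; linarith
  -- f is positive at M
  have hfpos : ∀ t : ℝ, M ≤ t → 0 < f t := by
    intro t ht
    have h1 : t ≤ Real.sqrt (t ^ 2 + 2 * β) := by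
      nlinarith [Real.sq_sqrt (by nlinarith : (0:ℝ) ≤ t ^ 2 + 2 * β),
        Real.sqrt_nonneg (t ^ 2 + 2 * β), abs_nonneg ωp, abs_nonneg ωm]
    have h2 : γ + 1 ≤ ωp + Real.sqrt (t ^ 2 + 2 * β) := by
      have := neg_abs_le ωp
      nlinarith [abs_nonneg ωm]
    have h3 : (1 : ℝ) ≤ ωm + t := by
      have := neg_abs_le ωm
      nlinarith [abs_nonneg ωp]
    have : γ + 1 ≤ (ωp + Real.sqrt (t ^ 2 + 2 * β)) * (ωm + t) := by nlinarith
    simp only [hf]; nlinarith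
  -- f is negative at t ≤ -M
  have hfneg : ∀ t : ℝ, t ≤ -M → f t < 0 := by
    intro t ht
    have h1 : -t ≤ Real.sqrt (t ^ 2 + 2 * β) := by
      nlinarith [Real.sq_sqrt (by nlinarith : (0:ℝ) ≤ t ^ 2 + 2 * β),
        Real.sqrt_nonneg (t ^ 2 + 2 * β)]
    have h2 : γ + 1 ≤ ωp + Real.sqrt (t ^ 2 + 2 * β) := by
      have := neg_abs_le ωp
      nlinarith [abs_nonneg ωm]
    have h3 : ωm + t ≤ -1 := by
      have := le_abs_self ωm
      nlinarith [abs_nonneg ωp]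
    have : (ωp + Real.sqrt (t ^ 2 + 2 * β)) * (ωm + t) ≤ (γ + 1) * (-1) := by nlinarith
    simp only [hf]; nlinarith
  -- f is analytic
  have hfa : AnalyticOnNhd ℝ f Set.univ := by
    intro t _
    have hpos : (0 : ℝ) < t ^ 2 + 2 * β := by positivity
    have h1 : AnalyticAt ℝ (fun t : ℝ => t ^ 2 + 2 * β) t :=
      ((analyticAt_id.pow 2).add analyticAt_const)
    have h2 : AnalyticAt ℝ Real.sqrt ((fun t : ℝ => t ^ 2 + 2 * β) t) :=
      (Real.contDiffAt_sqrt (n := (⊤ : WithTop ℕ∞)) hpos.ne').analyticAt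
    have h3 : AnalyticAt ℝ (fun t : ℝ => Real.sqrt (t ^ 2 + 2 * β)) t :=
      AnalyticAt.comp (f := fun t : ℝ => t ^ 2 + 2 * β) h2 h1
    have h4 : AnalyticAt ℝ (fun t : ℝ => ωm + t) t := analyticAt_const.add analyticAt_id
    exact ((analyticAt_const.add h3).mul h4).sub analyticAt_const
  -- zero set of f is finite
  have hZ : {t : ℝ | f t = 0}.Finite := by
    by_contra hinf
    have hsub : {t : ℝ | f t = 0} ⊆ Set.Icc (-M) M := by
      intro t ht
      simp only [Set.mem_setOf_eq] at ht
      constructor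
      · by_contra h; push_neg at h
        exact absurd ht (hfneg t h.le).ne
      · by_contra h; push_neg at h
        exact absurd ht (hfpos t h.le).ne'
    have hinf' : {t : ℝ | f t = 0}.Infinite := hinf
    obtain ⟨t₀, _, hacc⟩ := hinf'.exists_accPt_of_subset_isCompact isCompact_Icc hsub
    rw [accPt_iff_frequently] at hacc
    have hfreq : ∃ᶠ z in nhdsWithin t₀ {t₀}ᶜ, f z = 0 := by
      rw [frequently_nhdsWithin_iff]
      exact hacc.mono fun y hy => ⟨hy.2, hy.1⟩
    have := hfa.eqOn_zero_of_preconnected_of_frequently_eq_zero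
      isPreconnected_univ (Set.mem_univ t₀) hfreq
    exact absurd (this (Set.mem_univ M)) (hfpos M le_rfl).ne'
  -- inject S into the zero set via t = √(-β - E)
  apply Set.Finite.of_finite_image (f := fun E => Real.sqrt (-β - E))
  · apply hZ.subset
    rintro t ⟨E, ⟨hE1, hE2⟩, rfl⟩
    have hpos : (0 : ℝ) ≤ -β - E := by linarith
    have hsq : Real.sqrt (-β - E) ^ 2 = -β - E := Real.sq_sqrt hpos
    have hb : β - E = Real.sqrt (-β - E) ^ 2 + 2 * β := by linarith
    simp only [Set.mem_setOf_eq, hf]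
    rw [← hb]
    linarith [hE2]
  · intro E1 h1 E2 h2 heq
    have p1 : (0 : ℝ) ≤ -β - E1 := by linarith [h1.1]
    have p2 : (0 : ℝ) ≤ -β - E2 := by linarith [h2.1]
    have := congrArg (fun x => x ^ 2) heq
    simp only [Real.sq_sqrt p1, Real.sq_sqrt p2] at this
    linarith
end

section
/- Define U_ν(x) := (1/x)( ((ν²+1)/ν²) arctan(x) − 1/x ) on (0, ν] for ν ≥ 1. Then U_1 has exactly one zero x_{1,1} in (0, 1], and U_1(x) ≥ 0 if and only if x ≥ x_{1,1}; moreover U_1 is strictly increasing on (0, 1]. -/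
lemma arctan_lt_self' {x : ℝ} (hx : 0 < x) : Real.arctan x < x := by
  have h1 : 0 < Real.arctan x := by
    have := Real.arctan_strictMono hx
    simpa [Real.arctan_zero] using this
  have := Real.lt_tan h1 (Real.arctan_lt_pi_div_two x)
  simpa [Real.tan_arctan] using this

theorem stmt10 (U : ℝ → ℝ)
    (hU : ∀ x : ℝ, U x = (1 / x) * (2 * Real.arctan x - 1 / x)) :
    ∃ x1 ∈ Set.Ioc (0 : ℝ) 1, U x1 = 0 ∧
      (∀ x ∈ Set.Ioc (0 : ℝ) 1, U x = 0 → x = x1) ∧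
      (∀ x ∈ Set.Ioc (0 : ℝ) 1, (0 ≤ U x ↔ x1 ≤ x)) ∧
      StrictMonoOn U (Set.Ioc (0 : ℝ) 1) := by
  have hUf : U = fun x => (1 / x) * (2 * Real.arctan x - 1 / x) := funext hU
  subst hUf
  set f : ℝ → ℝ := fun x => (1 / x) * (2 * Real.arctan x - 1 / x) with hf
  -- continuity on Ioc 0 1
  have hne : ∀ x ∈ Set.Ioc (0:ℝ) 1, x ≠ 0 := fun x hx => ne_of_gt hx.1
  have hc : ContinuousOn f (Set.Ioc 0 1) := by
    apply ContinuousOn.mul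
    · exact continuousOn_const.div continuousOn_id hne
    · exact ((continuous_const.mul Real.continuous_arctan).continuousOn.sub
        (continuousOn_const.div continuousOn_id hne))
  -- strict monotonicity
  have hmono : StrictMonoOn f (Set.Ioc (0:ℝ) 1) := by
    apply strictMonoOn_of_deriv_pos (convex_Ioc 0 1) hc
    intro x hx
    rw [interior_Ioc] at hx
    obtain ⟨hx0, hx1⟩ := hx
    have hxne : x ≠ 0 := ne_of_gt hx0
    have h1x : (0:ℝ) < 1 + x ^ 2 := by positivity
    have hderiv : HasDerivAt f
        (-(x ^ 2)⁻¹ * (2 * Real.arctan x - 1 / x)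
          + (1 / x) * (2 * (1 / (1 + x ^ 2)) - -(x ^ 2)⁻¹)) x := by
      have h1 : HasDerivAt (fun y : ℝ => 1 / y) (-(x ^ 2)⁻¹) x := by
        simpa [one_div] using hasDerivAt_inv hxne
      have h2 : HasDerivAt (fun y : ℝ => 2 * Real.arctan y - 1 / y)
          (2 * (1 / (1 + x ^ 2)) - -(x ^ 2)⁻¹) x :=
        ((Real.hasDerivAt_arctan x).const_mul 2).sub h1
      exact h1.mul h2
    rw [hderiv.deriv]
    have harc : Real.arctan x < x := arctan_lt_self' hx0
    have harc0 : 0 < Real.arctan x := by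
      have := Real.arctan_strictMono hx0
      simpa [Real.arctan_zero] using this
    have key : -(x ^ 2)⁻¹ * (2 * Real.arctan x - 1 / x)
          + (1 / x) * (2 * (1 / (1 + x ^ 2)) - -(x ^ 2)⁻¹)
        = 2 * (1 + x ^ 2 / (1 + x ^ 2) - x * Real.arctan x) / x ^ 3 := by
      field_simp
      ring
    rw [key]
    have hnum : 0 < 1 + x ^ 2 / (1 + x ^ 2) - x * Real.arctan x := by
      have h1 : x * Real.arctan x < x * x := by nlinarith
      have h2 : x * x < 1 := by nlinarith
      have h3 : 0 ≤ x ^ 2 / (1 + x ^ 2) := by positivity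
      nlinarith
    positivity
  -- values at endpoints of [1/2, 1]
  have hf1 : 0 < f 1 := by
    have : f 1 = Real.pi / 2 - 1 := by
      simp [hf, Real.arctan_one]; ring
    rw [this]
    nlinarith [Real.pi_gt_three]
  have hfh : f (1/2) < 0 := by
    have harc : Real.arctan (1/2) < 1/2 := arctan_lt_self' (by norm_num)
    have : f (1/2) = 2 * (2 * Real.arctan (1/2) - 2) := by
      simp only [hf]
      norm_num
    rw [this]; nlinarith
  -- existence via IVT
  have hsub : Set.Icc (1/2 : ℝ) 1 ⊆ Set.Ioc 0 1 := fun y hy =>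
    ⟨lt_of_lt_of_le (by norm_num) hy.1, hy.2⟩
  have hivt := intermediate_value_Icc (by norm_num : (1/2:ℝ) ≤ 1) (hc.mono hsub)
  have h0mem : (0:ℝ) ∈ Set.Icc (f (1/2)) (f 1) := ⟨le_of_lt hfh, le_of_lt hf1⟩
  obtain ⟨x1, hx1mem, hx1z⟩ := hivt h0mem
  have hx1Ioc : x1 ∈ Set.Ioc (0:ℝ) 1 := hsub hx1mem
  refine ⟨x1, hx1Ioc, hx1z, ?_, ?_, hmono⟩
  · intro x hx hxz
    exact hmono.injOn hx hx1Ioc (by rw [hxz, hx1z])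
  · intro x hx
    constructor
    · intro h0le
      by_contra hlt
      push_neg at hlt
      have := hmono hx hx1Ioc hlt
      rw [hx1z] at this
      linarith
    · intro hle
      rcases eq_or_lt_of_le hle with heq | hlt
      · rw [← heq, hx1z]
      · have := hmono hx1Ioc hx hlt
        rw [hx1z] at this
        linarith
end

section
/- For ν ≥ 1, the function U_ν(x) := (1/x)( ((ν²+1)/ν²) arctan(x) − 1/x ) has exactly one zero in (0, ∞), and U_ν(x) < 0 to the left of the zero and U_ν(x) > 0 to the right of it. -/
theorem stmt11 (ν : ℝ) (hν : 1 ≤ ν) (U : ℝ → ℝ)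
    (hU : ∀ x : ℝ, U x = (1 / x) * (((ν ^ 2 + 1) / ν ^ 2) * Real.arctan x - 1 / x)) :
    ∃ x0 : ℝ, 0 < x0 ∧ U x0 = 0 ∧
      ∀ x : ℝ, 0 < x → (x < x0 → U x < 0) ∧ (x0 < x → 0 < U x) := by
  set c : ℝ := (ν ^ 2 + 1) / ν ^ 2 with hc
  have hν0 : (0:ℝ) < ν ^ 2 := by positivity
  have hc1 : 1 ≤ c := by
    rw [hc, le_div_iff₀ hν0]; linarith
  set g : ℝ → ℝ := fun x => c * Real.arctan x - 1 / x with hg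
  have hmono : ∀ x y : ℝ, 0 < x → x < y → g x < g y := by
    intro x y hx hxy
    have hy : 0 < y := hx.trans hxy
    have h1 : Real.arctan x < Real.arctan y := Real.arctan_strictMono hxy
    have h2 : 1 / y < 1 / x := one_div_lt_one_div_of_lt hx hxy
    have : c * Real.arctan x ≤ c * Real.arctan y := by nlinarith
    simp only [hg]; nlinarith
  set a : ℝ := 1 / (2 * c + 1) with ha
  have hapos : 0 < a := by positivity
  have ha1 : a < 1 := by
    rw [ha, div_lt_one (by linarith)]; linarith
  have hga : g a < 0 := by
    have h1 : Real.arctan a < Real.pi / 2 := Real.arctan_lt_pi_div_two a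
    have hpi : Real.pi < 3.15 := Real.pi_lt_d2
    have h2 : (1:ℝ) / a = 2 * c + 1 := by
      rw [ha, one_div_one_div]
    have : c * Real.arctan a < c * 2 := by nlinarith
    simp only [hg]; rw [h2]; nlinarith
  have hg2 : 0 < g 2 := by
    have h1 : Real.arctan 1 < Real.arctan 2 := Real.arctan_strictMono one_lt_two
    rw [Real.arctan_one] at h1
    have hpi : (3:ℝ) < Real.pi := Real.pi_gt_three
    have h2 : (3:ℝ)/4 < Real.arctan 2 := by linarith
    have : Real.arctan 2 ≤ c * Real.arctan 2 := by nlinarith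
    simp only [hg]; nlinarith
  have ha2 : a ≤ 2 := by linarith
  have hcont : ContinuousOn g (Set.Icc a 2) := by
    apply ContinuousOn.sub
    · exact (continuous_const.mul Real.continuous_arctan).continuousOn
    · apply ContinuousOn.div continuousOn_const continuousOn_id
      intro x hx
      have : 0 < x := lt_of_lt_of_le hapos hx.1
      exact ne_of_gt this
  have h0mem : (0:ℝ) ∈ Set.Icc (g a) (g 2) := ⟨le_of_lt hga, le_of_lt hg2⟩
  obtain ⟨x0, hx0mem, hgx0⟩ := intermediate_value_Icc ha2 hcont h0mem
  have hx0pos : 0 < x0 := lt_of_lt_of_le hapos hx0mem.1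
  have hUeq : ∀ x : ℝ, U x = (1 / x) * g x := fun x => hU x
  refine ⟨x0, hx0pos, ?_, ?_⟩
  · rw [hUeq, hgx0, mul_zero]
  · intro x hx
    constructor
    · intro hlt
      have : g x < 0 := by
        have := hmono x x0 hx hlt
        rw [hgx0] at this; exact this
      rw [hUeq]
      exact mul_neg_of_pos_of_neg (by positivity) this
    · intro hlt
      have : 0 < g x := by
        have := hmono x0 x hx0pos hlt
        rw [hgx0] at this; exact this
      rw [hUeq]
      positivity
end
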